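/- arXiv:2102.10159 — 3 statements merged into one kernel-verified Lean document; each statement's English description precedes it below -/
import Mathlib

section
/- Suppose u₁ ∈ U^h_{c₁} and u₂ ∈ V^h_{c₂}, where U^h_c is the set of grid functions u with F^h_i[u] + c ≤ 0 at all interior grid points and H^h_i[u] < 0 at all boundary grid points, and V^h_c is defined with the reversed strict/non-strict inequalities (F^h_i[u] + c ≥ 0 at interior points, H^h_i[u] > 0 at boundary points). Assume F^h and H^h are monotone schemes in the sense that G^h(x, u(x) − u(·)) is non-decreasing in u(x) and in the differences u(x) − u(y), and are invariant under adding constants to u. Then c₁ ≤ c₂. -/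
/-!
At a point `x` where `u₁ - u₂` is maximal, every difference `u₁ x - u₁ y` dominates
`u₂ x - u₂ y`, so by monotonicity the scheme evaluated on `u₁` at `x` is at least the scheme
evaluated on `u₂`. If `x` is a boundary point this contradicts `H[u₁] < 0 < H[u₂]`; if it is
interior, `-c₂ ≤ F[u₂] ≤ F[u₁] ≤ -c₁`.
-/

lemma sub_le_sub_of_forall_sub_le {α : Type*} {u₁ u₂ : α → ℝ} {x : α}
    (hx : ∀ y, u₁ y - u₂ y ≤ u₁ x - u₂ x) (y : α) : u₂ x - u₂ y ≤ u₁ x - u₁ y := by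
  linarith [hx y]

lemma scheme_le_of_forall_sub_le {α : Type*} {G : (α → ℝ) → ℝ}
    (hG : ∀ d₁ d₂ : α → ℝ, (∀ y, d₁ y ≤ d₂ y) → G d₁ ≤ G d₂) {u₁ u₂ : α → ℝ} {x : α}
    (hx : ∀ y, u₁ y - u₂ y ≤ u₁ x - u₂ x) :
    G (fun y => u₂ x - u₂ y) ≤ G (fun y => u₁ x - u₁ y) :=
  hG _ _ (sub_le_sub_of_forall_sub_le hx)

/-- Comparison of eigenvalues: if `u₁` is a subsolution with constant `c₁` (strictly at the
boundary) and `u₂` a supersolution with constant `c₂` (strictly at the boundary) for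
monotone schemes depending only on differences, then `c₁ ≤ c₂`. -/
theorem eigenvalue_comparison {α : Type*} [Fintype α] [Nonempty α]
    (interiorPts : Set α)
    (F H : α → (α → ℝ) → ℝ)
    (hFmono : ∀ x (d₁ d₂ : α → ℝ), (∀ y, d₁ y ≤ d₂ y) → F x d₁ ≤ F x d₂)
    (hHmono : ∀ x (d₁ d₂ : α → ℝ), (∀ y, d₁ y ≤ d₂ y) → H x d₁ ≤ H x d₂)
    (c₁ c₂ : ℝ) (u₁ u₂ : α → ℝ)
    (h1F : ∀ x ∈ interiorPts, F x (fun y => u₁ x - u₁ y) + c₁ ≤ 0)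
    (h1H : ∀ x ∉ interiorPts, H x (fun y => u₁ x - u₁ y) < 0)
    (h2F : ∀ x ∈ interiorPts, F x (fun y => u₂ x - u₂ y) + c₂ ≥ 0)
    (h2H : ∀ x ∉ interiorPts, H x (fun y => u₂ x - u₂ y) > 0) :
    c₁ ≤ c₂ := by
  obtain ⟨x, hx⟩ := Finite.exists_max fun y => u₁ y - u₂ y
  by_cases hxi : x ∈ interiorPts
  · linarith [h1F x hxi, h2F x hxi, scheme_le_of_forall_sub_le (hFmono x) hx]
  · linarith [h1H x hxi, h2H x hxi, scheme_le_of_forall_sub_le (hHmono x) hx]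
end

section
/- Let u : X̄ → ℝ solve a consistent monotone discrete eigenvalue scheme with eigenvalue c^h, and suppose there exist u₋ ∈ U^h_{c_ex − ω(h)} and u₊ ∈ V^h_{c_ex + ω(h)}. Then, given the eigenvalue comparison lemma (u₁ ∈ U^h_{c₁} and u₂ ∈ V^h_{c₂} implies c₁ ≤ c₂), the computed eigenvalue satisfies |c^h − c_ex| ≤ ω(h). -/
/-!
At a maximum point `x` of `u₁ - u₂` every difference `u₂ x - u₂ y` is dominated by
`u₁ x - u₁ y`, so by monotonicity the scheme evaluated on `u₂` at `x` is at most the scheme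
evaluated on `u₁`. A strict ordering of the boundary operators rules out `x` on the boundary,
and at an interior `x` this turns `F[u₁] + c₁ ≤ 0 ≤ F[u₂] + c₂` into `c₁ ≤ c₂`. Comparing the
subsolution `u₋` with `v`, and `v` with the supersolution `u₊`, pins `c^h` between
`c_ex - ω` and `c_ex + ω`.
-/

section Comparison

variable {α : Type*} [Finite α] [Nonempty α] {interiorPts : Set α}
  {F H : α → (α → ℝ) → ℝ}

lemma exists_forall_sub_le_sub (u₁ u₂ : α → ℝ) :
    ∃ x, ∀ y, u₂ x - u₂ y ≤ u₁ x - u₁ y := by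
  obtain ⟨x, hx⟩ := Finite.exists_max (fun x => u₁ x - u₂ x)
  exact ⟨x, fun y => by linarith [hx y]⟩

lemma le_of_scheme_comparison (hF : ∀ x, Monotone (F x)) (hH : ∀ x, Monotone (H x))
    {u₁ u₂ : α → ℝ} {c₁ c₂ : ℝ}
    (h₁ : ∀ x ∈ interiorPts, F x (fun y => u₁ x - u₁ y) + c₁ ≤ 0)
    (h₂ : ∀ x ∈ interiorPts, 0 ≤ F x (fun y => u₂ x - u₂ y) + c₂)
    (hbdry : ∀ x ∉ interiorPts, H x (fun y => u₁ x - u₁ y) < H x (fun y => u₂ x - u₂ y)) :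
    c₁ ≤ c₂ := by
  obtain ⟨x, hx⟩ := exists_forall_sub_le_sub u₁ u₂
  by_cases hxI : x ∈ interiorPts
  · have := hF x hx
    linarith [h₁ x hxI, h₂ x hxI]
  · exact absurd (hH x hx) (hbdry x hxI).not_ge

end Comparison

theorem eigenvalue_convergence_general {α : Type*} [Fintype α] [Nonempty α]
    (interiorPts : Set α)
    (F H : α → (α → ℝ) → ℝ)
    (hFmono : ∀ x (d₁ d₂ : α → ℝ), (∀ y, d₁ y ≤ d₂ y) → F x d₁ ≤ F x d₂)
    (hHmono : ∀ x (d₁ d₂ : α → ℝ), (∀ y, d₁ y ≤ d₂ y) → H x d₁ ≤ H x d₂)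
    (v : α → ℝ) (ch cex ω : ℝ)
    (hvF : ∀ x ∈ interiorPts, F x (fun y => v x - v y) + ch = 0)
    (hvH : ∀ x ∉ interiorPts, H x (fun y => v x - v y) = 0)
    (hsub : ∃ uminus : α → ℝ,
      (∀ x ∈ interiorPts, F x (fun y => uminus x - uminus y) + (cex - ω) ≤ 0) ∧
      (∀ x ∉ interiorPts, H x (fun y => uminus x - uminus y) < 0))
    (hsup : ∃ uplus : α → ℝ,
      (∀ x ∈ interiorPts, F x (fun y => uplus x - uplus y) + (cex + ω) ≥ 0) ∧
      (∀ x ∉ interiorPts, H x (fun y => uplus x - uplus y) > 0)) :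
    |ch - cex| ≤ ω := by
  obtain ⟨um, humF, humH⟩ := hsub
  obtain ⟨up, hupF, hupH⟩ := hsup
  have hF : ∀ x, Monotone (F x) := fun x _ _ h => hFmono x _ _ h
  have hH : ∀ x, Monotone (H x) := fun x _ _ h => hHmono x _ _ h
  have hlower : cex - ω ≤ ch :=
    le_of_scheme_comparison hF hH humF (fun x hx => (hvF x hx).ge)
      fun x hx => (hvH x hx).symm ▸ humH x hx
  have hupper : ch ≤ cex + ω :=
    le_of_scheme_comparison hF hH (fun x hx => (hvF x hx).le) hupF
      fun x hx => (hvH x hx).symm ▸ hupH x hx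
  rw [abs_sub_le_iff]
  constructor <;> linarith

/-- Convergence of the computed eigenvalue: if `v` solves the discrete eigenvalue scheme
with eigenvalue `ch`, there exist a subsolution at level `cex − ω` and a supersolution at
level `cex + ω`, and the eigenvalue comparison lemma holds, then `|ch − cex| ≤ ω`. -/
theorem eigenvalue_convergence {α : Type*} [Fintype α] [Nonempty α]
    (interiorPts : Set α)
    (F H : α → (α → ℝ) → ℝ)
    (hFmono : ∀ x (d₁ d₂ : α → ℝ), (∀ y, d₁ y ≤ d₂ y) → F x d₁ ≤ F x d₂)
    (hHmono : ∀ x (d₁ d₂ : α → ℝ), (∀ y, d₁ y ≤ d₂ y) → H x d₁ ≤ H x d₂)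
    (v : α → ℝ) (ch cex ω : ℝ) (hω : 0 ≤ ω)
    (hvF : ∀ x ∈ interiorPts, F x (fun y => v x - v y) + ch = 0)
    (hvH : ∀ x ∉ interiorPts, H x (fun y => v x - v y) = 0)
    (hsub : ∃ uminus : α → ℝ,
      (∀ x ∈ interiorPts, F x (fun y => uminus x - uminus y) + (cex - ω) ≤ 0) ∧
      (∀ x ∉ interiorPts, H x (fun y => uminus x - uminus y) < 0))
    (hsup : ∃ uplus : α → ℝ,
      (∀ x ∈ interiorPts, F x (fun y => uplus x - uplus y) + (cex + ω) ≥ 0) ∧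
      (∀ x ∉ interiorPts, H x (fun y => uplus x - uplus y) > 0))
    (hcomp : ∀ (c₁ c₂ : ℝ) (u₁ u₂ : α → ℝ),
      (∀ x ∈ interiorPts, F x (fun y => u₁ x - u₁ y) + c₁ ≤ 0) →
      (∀ x ∉ interiorPts, H x (fun y => u₁ x - u₁ y) < 0) →
      (∀ x ∈ interiorPts, F x (fun y => u₂ x - u₂ y) + c₂ ≥ 0) →
      (∀ x ∉ interiorPts, H x (fun y => u₂ x - u₂ y) > 0) →
      c₁ ≤ c₂) :
    |ch - cex| ≤ ω :=
  eigenvalue_convergence_general interiorPts F H hFmono hHmono v ch cex ω hvF hvH hsub hsup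
end

section
/- Let t ⊂ ℝ² be a triangle with vertices x₀, x₁, x₂, where the maximal interior angle θ occurs at x₀ and satisfies |cos θ| ≤ M for some M < 1. Let u be an affine function on t with |u(xᵢ) − u(xⱼ)| ≤ R|xᵢ − xⱼ| for all vertex pairs i, j. Then the gradient p of u satisfies |p| ≤ 2R/(1 − M). -/
open scoped RealInnerProductSpace

/-!
Write `p = a (x₁ - x₀) + c (x₂ - x₀)` and set `s = |a| ‖x₁ - x₀‖`, `t = |c| ‖x₂ - x₀‖`.
Pairing `p` with `x₁ - x₀` and using the Lipschitz bound on the edge and the angle bound gives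
`s ≤ R + M t`, and symmetrically `t ≤ R + M s`. Adding, `(1 - M)(s + t) ≤ 2R`, while
`‖p‖ ≤ s + t` by the triangle inequality.
-/

section InnerProductSpace

variable {E : Type*} [NormedAddCommGroup E] [InnerProductSpace ℝ E]

theorem abs_mul_norm_le_of_abs_inner_le {v w : E} {a c M R : ℝ} (hv : v ≠ 0)
    (hpv : |⟪a • v + c • w, v⟫| ≤ R * ‖v‖) (hvw : |⟪v, w⟫| ≤ M * (‖v‖ * ‖w‖)) :
    |a| * ‖v‖ ≤ R + M * (|c| * ‖w‖) := by
  have hexpand : a * (‖v‖ * ‖v‖) = ⟪a • v + c • w, v⟫ - c * ⟪v, w⟫ := by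
    rw [inner_add_left, real_inner_smul_left, real_inner_smul_left,
      real_inner_self_eq_norm_mul_norm, real_inner_comm]
    ring
  refine le_of_mul_le_mul_right ?_ (norm_pos_iff.mpr hv)
  calc |a| * ‖v‖ * ‖v‖ = |⟪a • v + c • w, v⟫ - c * ⟪v, w⟫| := by
        rw [← hexpand, abs_mul, abs_of_nonneg (by positivity : 0 ≤ ‖v‖ * ‖v‖)]; ring
    _ ≤ |⟪a • v + c • w, v⟫| + |c| * |⟪v, w⟫| := by rw [← abs_mul]; exact abs_sub _ _
    _ ≤ R * ‖v‖ + |c| * (M * (‖v‖ * ‖w‖)) := by gcongr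
    _ = (R + M * (|c| * ‖w‖)) * ‖v‖ := by ring

theorem one_sub_mul_norm_le_of_abs_inner_le {v w : E} {a c M R : ℝ} (hv : v ≠ 0) (hw : w ≠ 0)
    (hM : M ≤ 1) (hpv : |⟪a • v + c • w, v⟫| ≤ R * ‖v‖)
    (hpw : |⟪a • v + c • w, w⟫| ≤ R * ‖w‖) (hvw : |⟪v, w⟫| ≤ M * (‖v‖ * ‖w‖)) :
    (1 - M) * ‖a • v + c • w‖ ≤ 2 * R := by
  have hs := abs_mul_norm_le_of_abs_inner_le hv hpv hvw
  have ht := abs_mul_norm_le_of_abs_inner_le (M := M) hw (by rwa [add_comm] at hpw)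
    (by rwa [real_inner_comm, mul_comm ‖w‖])
  have hnorm : ‖a • v + c • w‖ ≤ |a| * ‖v‖ + |c| * ‖w‖ := by
    simpa only [norm_smul, Real.norm_eq_abs] using norm_add_le (a • v) (c • w)
  linarith [mul_le_mul_of_nonneg_left hnorm (sub_nonneg.2 hM)]

end InnerProductSpace

theorem affine_gradient_bound_triangle_general
    (x₀ x₁ x₂ : EuclideanSpace ℝ (Fin 2))
    (hindep : LinearIndependent ℝ ![x₁ - x₀, x₂ - x₀])
    (M : ℝ) (hM : M < 1)
    (hangle : |⟪x₁ - x₀, x₂ - x₀⟫| ≤ M * (‖x₁ - x₀‖ * ‖x₂ - x₀‖))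
    (u : EuclideanSpace ℝ (Fin 2) → ℝ) (p : EuclideanSpace ℝ (Fin 2))
    (haff : ∀ x, u x = u x₀ + ⟪p, x - x₀⟫)
    (R : ℝ)
    (hLip : ∀ i j : Fin 3, |u (![x₀, x₁, x₂] i) - u (![x₀, x₁, x₂] j)|
      ≤ R * ‖(![x₀, x₁, x₂] i) - (![x₀, x₁, x₂] j)‖) :
    ‖p‖ ≤ 2 * R / (1 - M) := by
  have hedge : ∀ x, |u x - u x₀| ≤ R * ‖x - x₀‖ → |⟪p, x - x₀⟫| ≤ R * ‖x - x₀‖ :=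
    fun x h => by rwa [haff x, add_sub_cancel_left] at h
  have hspan : Submodule.span ℝ {x₁ - x₀, x₂ - x₀} = ⊤ := by
    simpa [Set.pair_comm] using hindep.span_eq_top_of_card_eq_finrank (by simp)
  obtain ⟨a, c, rfl⟩ := Submodule.mem_span_pair.mp (hspan ▸ Submodule.mem_top (x := p))
  rw [le_div_iff₀ (sub_pos.2 hM), mul_comm]
  exact one_sub_mul_norm_le_of_abs_inner_le (by simpa using hindep.ne_zero 0)
    (by simpa using hindep.ne_zero 1) hM.le (hedge x₁ (hLip 1 0)) (hedge x₂ (hLip 2 0)) hangle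

/-- Gradient bound for an affine function on a nondegenerate triangle whose maximal
interior angle θ (at the vertex x₀) satisfies `|cos θ| ≤ M < 1`, given discrete
Lipschitz bounds at the vertices. -/
theorem affine_gradient_bound_triangle
    (x₀ x₁ x₂ : EuclideanSpace ℝ (Fin 2))
    (hindep : LinearIndependent ℝ ![x₁ - x₀, x₂ - x₀])
    (M : ℝ) (hM : M < 1)
    (hangle : |⟪x₁ - x₀, x₂ - x₀⟫| ≤ M * (‖x₁ - x₀‖ * ‖x₂ - x₀‖))
    (hmaxangle : ∀ i j k : Fin 3, ({i, j, k} : Set (Fin 3)) = Set.univ →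
      ⟪(![x₀, x₁, x₂] j) - (![x₀, x₁, x₂] i), (![x₀, x₁, x₂] k) - (![x₀, x₁, x₂] i)⟫
        / (‖(![x₀, x₁, x₂] j) - (![x₀, x₁, x₂] i)‖ * ‖(![x₀, x₁, x₂] k) - (![x₀, x₁, x₂] i)‖)
      ≥ ⟪x₁ - x₀, x₂ - x₀⟫ / (‖x₁ - x₀‖ * ‖x₂ - x₀‖))
    (u : EuclideanSpace ℝ (Fin 2) → ℝ) (p : EuclideanSpace ℝ (Fin 2))
    (haff : ∀ x, u x = u x₀ + ⟪p, x - x₀⟫)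
    (R : ℝ)
    (hLip : ∀ i j : Fin 3, |u (![x₀, x₁, x₂] i) - u (![x₀, x₁, x₂] j)|
      ≤ R * ‖(![x₀, x₁, x₂] i) - (![x₀, x₁, x₂] j)‖) :
    ‖p‖ ≤ 2 * R / (1 - M) :=
  affine_gradient_bound_triangle_general x₀ x₁ x₂ hindep M hM hangle u p haff R hLip
end
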